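/- (One-dimensional Floer–Hofer estimate) Let λ > 0, η > 0 with λη² ≤ 1, let M ≥ 0 and A ∈ ℝ. Suppose s₀ < s₁ are real numbers with s₁ − s₀ ≤ 2η, and g: [s₀,s₁] → ℝ is twice continuously differentiable with g(s₀) ≤ M, g(s₁) ≤ M, and g''(s) + λ g(s) ≥ A for all s ∈ [s₀,s₁]. Then g(s) ≤ (λM + |A|)η² + M for all s ∈ [s₀,s₁]. -/

import Mathlib

/-! Subtracting the barrier `h s = (λM + |A|)(ε² - (s - m)²) + M`, with `m` the midpoint and `ε`
the half-width of `[s₀, s₁]`, leaves a function `φ = g - h` with `φ'' + λφ ≥ 0` and `φ ≤ 0` at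
both ends. Since `λε² ≤ 1 < (π/2)²`, `c s = cos (√λ (s - m))` is a positive solution of
`c'' + λc = 0` on the interval. The Wronskian `φ' c - φ c'` is then nondecreasing, so the
derivative of `φ / c` changes sign at most once, from `-` to `+`; hence `φ / c` is bounded by its
endpoint values, which are `≤ 0`. -/

open Set Real

theorem le_max_of_hasDerivAt_div_of_monotoneOn {ψ W k : ℝ → ℝ} {a b : ℝ}
    (hψ : ContinuousOn ψ (Icc a b)) (hderiv : ∀ t ∈ Ioo a b, HasDerivAt ψ (W t / k t) t)
    (hk : ∀ t ∈ Ioo a b, 0 ≤ k t) (hW : MonotoneOn W (Ioo a b)) :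
    ∀ x ∈ Icc a b, ψ x ≤ max (ψ a) (ψ b) := by
  rintro x ⟨hax, hxb⟩
  rcases hax.eq_or_lt with rfl | hax
  · exact le_max_left _ _
  rcases hxb.eq_or_lt with rfl | hxb
  · exact le_max_right _ _
  rcases le_total 0 (W x) with hWx | hWx
  · have hmono : MonotoneOn ψ (Icc x b) := by
      refine monotoneOn_of_hasDerivWithinAt_nonneg (convex_Icc x b) (f' := fun t => W t / k t)
        (hψ.mono (Icc_subset_Icc hax.le le_rfl)) (fun t ht => ?_) (fun t ht => ?_) <;>
        rw [interior_Icc] at ht <;> have htab : t ∈ Ioo a b := ⟨hax.trans ht.1, ht.2⟩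
      · exact (hderiv t htab).hasDerivWithinAt
      · exact div_nonneg (hWx.trans (hW ⟨hax, hxb⟩ htab ht.1.le)) (hk t htab)
    exact (hmono (left_mem_Icc.2 hxb.le) (right_mem_Icc.2 hxb.le) hxb.le).trans (le_max_right _ _)
  · have hanti : AntitoneOn ψ (Icc a x) := by
      refine antitoneOn_of_hasDerivWithinAt_nonpos (convex_Icc a x) (f' := fun t => W t / k t)
        (hψ.mono (Icc_subset_Icc le_rfl hxb.le)) (fun t ht => ?_) (fun t ht => ?_) <;>
        rw [interior_Icc] at ht <;> have htab : t ∈ Ioo a b := ⟨ht.1, ht.2.trans hxb⟩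
      · exact (hderiv t htab).hasDerivWithinAt
      · exact div_nonpos_of_nonpos_of_nonneg ((hW htab ⟨hax, hxb⟩ ht.2.le).trans hWx) (hk t htab)
    exact (hanti (left_mem_Icc.2 hax.le) (right_mem_Icc.2 hax.le) hax.le).trans (le_max_left _ _)

theorem cos_sqrt_mul_sub_midpoint_pos {lam a b t : ℝ} (hlam : 0 ≤ lam)
    (hwidth : lam * (b - a) ^ 2 < π ^ 2) (ht : t ∈ Icc a b) :
    0 < cos (√lam * (t - (a + b) / 2)) := by
  have hba : √lam * (b - a) < π :=
    lt_of_pow_lt_pow_left₀ 2 pi_pos.le (by rwa [mul_pow, sq_sqrt hlam])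
  have hdist : |t - (a + b) / 2| ≤ (b - a) / 2 := abs_le.2 ⟨by linarith [ht.1], by linarith [ht.2]⟩
  have hangle : |√lam * (t - (a + b) / 2)| < π / 2 := by
    rw [abs_mul, abs_of_nonneg (sqrt_nonneg lam)]
    nlinarith [mul_le_mul_of_nonneg_left hdist (sqrt_nonneg lam)]
  exact cos_pos_of_mem_Ioo ⟨by linarith [neg_abs_le (√lam * (t - (a + b) / 2))],
    (le_abs_self _).trans_lt hangle⟩

theorem nonpos_of_deriv2_add_mul_nonneg {φ φ' φ'' : ℝ → ℝ} {lam a b : ℝ} (hlam : 0 ≤ lam)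
    (hwidth : lam * (b - a) ^ 2 < π ^ 2) (hφ : ContinuousOn φ (Icc a b))
    (hφ' : ∀ t ∈ Ioo a b, HasDerivAt φ (φ' t) t) (hφ'' : ∀ t ∈ Ioo a b, HasDerivAt φ' (φ'' t) t)
    (hineq : ∀ t ∈ Ioo a b, 0 ≤ φ'' t + lam * φ t) (ha : φ a ≤ 0) (hb : φ b ≤ 0) :
    ∀ x ∈ Icc a b, φ x ≤ 0 := by
  set r := √lam
  set m := (a + b) / 2
  set c : ℝ → ℝ := fun t => cos (r * (t - m))
  set c' : ℝ → ℝ := fun t => -sin (r * (t - m)) * r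
  have hinner (t : ℝ) : HasDerivAt (fun s => r * (s - m)) r t := by
    simpa using ((hasDerivAt_id t).sub_const m).const_mul r
  have hc (t : ℝ) : HasDerivAt c (c' t) t := (hinner t).cos
  have hc' (t : ℝ) : HasDerivAt c' (-(lam * c t)) t := by
    have hr : r * r = lam := mul_self_sqrt hlam
    exact ((hinner t).sin.neg.mul_const r).congr_deriv (by rw [← hr]; ring)
  have hcpos : ∀ t ∈ Icc a b, 0 < c t := fun t ht => cos_sqrt_mul_sub_midpoint_pos hlam hwidth ht
  have hwronskian : MonotoneOn (fun t => φ' t * c t - φ t * c' t) (Ioo a b) := by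
    refine monotoneOn_of_hasDerivWithinAt_nonneg (convex_Ioo a b)
      (f' := fun t => (φ'' t + lam * φ t) * c t) (fun t ht => ?_) (fun t ht => ?_) (fun t ht => ?_)
    · exact (((hφ'' t ht).mul (hc t)).sub ((hφ' t ht).mul (hc' t))).continuousAt.continuousWithinAt
    · rw [interior_Ioo] at ht
      exact (((hφ'' t ht).mul (hc t)).sub ((hφ' t ht).mul (hc' t))).hasDerivWithinAt.congr_deriv
        (by ring)
    · rw [interior_Ioo] at ht
      exact mul_nonneg (hineq t ht) (hcpos t (Ioo_subset_Icc_self ht)).le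
  have hquotient : ∀ x ∈ Icc a b, (φ / c) x ≤ max ((φ / c) a) ((φ / c) b) :=
    le_max_of_hasDerivAt_div_of_monotoneOn
      (hφ.div (continuous_cos.comp (continuous_const.mul (continuous_sub_right m))).continuousOn
        fun t ht => (hcpos t ht).ne')
      (fun t ht => (hφ' t ht).div (hc t) (hcpos t (Ioo_subset_Icc_self ht)).ne')
      (fun t _ => sq_nonneg _) hwronskian
  intro x hx
  have hab : a ≤ b := hx.1.trans hx.2
  have hendpoints : max ((φ / c) a) ((φ / c) b) ≤ 0 :=
    max_le (div_nonpos_of_nonpos_of_nonneg ha (hcpos a (left_mem_Icc.2 hab)).le)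
      (div_nonpos_of_nonpos_of_nonneg hb (hcpos b (right_mem_Icc.2 hab)).le)
  have hψx := (hquotient x hx).trans hendpoints
  rwa [Pi.div_apply, div_le_iff₀ (hcpos x hx), zero_mul] at hψx

theorem le_barrier_of_deriv2_add_mul_ge {g g' g'' : ℝ → ℝ} {lam M A a b : ℝ} (hlam : 0 ≤ lam)
    (hM : 0 ≤ M) (hwidth : lam * ((b - a) / 2) ^ 2 ≤ 1) (hg : ContinuousOn g (Icc a b))
    (hg' : ∀ t ∈ Ioo a b, HasDerivAt g (g' t) t) (hg'' : ∀ t ∈ Ioo a b, HasDerivAt g' (g'' t) t)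
    (hineq : ∀ t ∈ Ioo a b, A ≤ g'' t + lam * g t) (ha : g a ≤ M) (hb : g b ≤ M) :
    ∀ x ∈ Icc a b, g x ≤ (lam * M + |A|) * (((b - a) / 2) ^ 2 - (x - (a + b) / 2) ^ 2) + M := by
  set C := lam * M + |A| with hC
  set ε := (b - a) / 2 with hε
  set m := (a + b) / 2 with hm
  set h : ℝ → ℝ := fun s => C * (ε ^ 2 - (s - m) ^ 2) + M
  have hC_nonneg : 0 ≤ C := add_nonneg (mul_nonneg hlam hM) (abs_nonneg A)
  have hh (t : ℝ) : HasDerivAt h (-(2 * C * (t - m))) t := by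
    refine (((((hasDerivAt_id t).sub_const m).pow 2).const_sub _).const_mul C).add_const M
      |>.congr_deriv ?_
    simp only [id, Nat.cast_ofNat]
    ring
  have hh' (t : ℝ) : HasDerivAt (fun s => 2 * C * (s - m)) (2 * C) t := by
    simpa using ((hasDerivAt_id t).sub_const m).const_mul (2 * C)
  have hsuper : ∀ t ∈ Ioo a b, 0 ≤ (g'' t + 2 * C) + lam * (g - h) t := by
    intro t ht
    have hdist : (t - m) ^ 2 ≤ ε ^ 2 := sq_le_sq' (by linarith [ht.1]) (by linarith [ht.2])
    have hbump : lam * (C * (ε ^ 2 - (t - m) ^ 2)) ≤ C := by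
      nlinarith [mul_nonneg hlam (sq_nonneg (t - m)), mul_nonneg hC_nonneg (sq_nonneg (t - m))]
    show 0 ≤ g'' t + 2 * C + lam * (g t - (C * (ε ^ 2 - (t - m) ^ 2) + M))
    linarith [hineq t ht, neg_abs_le A]
  have hends (s : ℝ) (hs : (s - m) ^ 2 = ε ^ 2) (hgs : g s ≤ M) : (g - h) s ≤ 0 := by
    simp only [Pi.sub_apply, h, hs, sub_self, mul_zero, zero_add, sub_nonpos, hgs]
  have hwidth' : lam * (b - a) ^ 2 < π ^ 2 :=
    calc lam * (b - a) ^ 2 = 4 * (lam * ε ^ 2) := by rw [hε]; ring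
      _ ≤ 4 := by linarith
      _ < π ^ 2 := by nlinarith [pi_gt_three]
  intro x hx
  have hgh : (g - h) x ≤ 0 :=
    nonpos_of_deriv2_add_mul_nonneg (φ' := fun s => g' s + 2 * C * (s - m))
      (φ'' := fun s => g'' s + 2 * C) hlam hwidth'
      (hg.sub fun t _ => (hh t).continuousAt.continuousWithinAt)
      (fun t ht => ((hg' t ht).sub (hh t)).congr_deriv (sub_neg_eq_add _ _))
      (fun t ht => (hg'' t ht).add (hh' t))
      hsuper (hends a (by rw [hm, hε]; ring) ha) (hends b (by rw [hm, hε]; ring) hb) x hx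
  exact sub_nonpos.1 hgh

theorem stmt16_general (lam eta M A s0 s1 : ℝ) (hlam : 0 < lam)
    (hle : lam * eta ^ 2 ≤ 1) (hM : 0 ≤ M) (hwidth : s1 - s0 ≤ 2 * eta)
    (g g' g'' : ℝ → ℝ)
    (hg' : ∀ x ∈ Set.Icc s0 s1, HasDerivWithinAt g (g' x) (Set.Icc s0 s1) x)
    (hg'' : ∀ x ∈ Set.Icc s0 s1, HasDerivWithinAt g' (g'' x) (Set.Icc s0 s1) x)
    (h0 : g s0 ≤ M) (h1 : g s1 ≤ M)
    (hineq : ∀ x ∈ Set.Icc s0 s1, A ≤ g'' x + lam * g x) :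
    ∀ x ∈ Set.Icc s0 s1, g x ≤ (lam * M + |A|) * eta ^ 2 + M := by
  intro x hx
  have hhalf : ((s1 - s0) / 2) ^ 2 ≤ eta ^ 2 :=
    pow_le_pow_left₀ (by linarith [hx.1.trans hx.2]) (by linarith) 2
  have hinterior {f f' : ℝ → ℝ} (hf : ∀ x ∈ Icc s0 s1, HasDerivWithinAt f (f' x) (Icc s0 s1) x) :
      ∀ t ∈ Ioo s0 s1, HasDerivAt f (f' t) t := fun t ht =>
    (hf t (Ioo_subset_Icc_self ht)).hasDerivAt (Icc_mem_nhds ht.1 ht.2)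
  have hbarrier := le_barrier_of_deriv2_add_mul_ge hlam.le hM
    ((mul_le_mul_of_nonneg_left hhalf hlam.le).trans hle)
    (fun t ht => (hg' t ht).continuousWithinAt) (hinterior hg') (hinterior hg'')
    (fun t ht => hineq t (Ioo_subset_Icc_self ht)) h0 h1 x hx
  calc g x ≤ (lam * M + |A|) * (((s1 - s0) / 2) ^ 2 - (x - (s0 + s1) / 2) ^ 2) + M := hbarrier
    _ ≤ (lam * M + |A|) * eta ^ 2 + M := by
      gcongr
      linarith [sq_nonneg (x - (s0 + s1) / 2)]

theorem stmt16 (lam eta M A s0 s1 : ℝ) (hlam : 0 < lam) (heta : 0 < eta)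
    (hle : lam * eta ^ 2 ≤ 1) (hM : 0 ≤ M) (hs : s0 < s1) (hwidth : s1 - s0 ≤ 2 * eta)
    (g g' g'' : ℝ → ℝ)
    (hg' : ∀ x ∈ Set.Icc s0 s1, HasDerivWithinAt g (g' x) (Set.Icc s0 s1) x)
    (hg'' : ∀ x ∈ Set.Icc s0 s1, HasDerivWithinAt g' (g'' x) (Set.Icc s0 s1) x)
    (hcont : ContinuousOn g'' (Set.Icc s0 s1))
    (h0 : g s0 ≤ M) (h1 : g s1 ≤ M)
    (hineq : ∀ x ∈ Set.Icc s0 s1, A ≤ g'' x + lam * g x) :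
    ∀ x ∈ Set.Icc s0 s1, g x ≤ (lam * M + |A|) * eta ^ 2 + M :=
  stmt16_general lam eta M A s0 s1 hlam hle hM hwidth g g' g'' hg' hg'' h0 h1 hineq
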